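/- For n = 1, the second-order cumulant of groups of operators satisfies, in the sense of trace-norm convergence on 𝔏¹(ℋ_{s+1}) for f_{s+1} ∈ 𝔏¹₀(ℋ_{s+1}): lim_{t→0} (1/t) 𝔄₂(t,{Y},s+1) f_{s+1} = −ε Σ_{i=1}^{s} 𝒩_int(i,s+1) f_{s+1}, where (−𝒩_int(i,s+1)) f = −i(Φ(i,s+1) f − f Φ(i,s+1)). Moreover for n > 1, since the particles interact by a two-body potential, lim_{t→0} (1/t) 𝔄_{1+n}(t) f_{s+n} = 0 in trace norm on 𝔏¹(ℋ_{s+n}). -/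

import Mathlib

/-!
STATEMENT 5 (infinitesimal generator of the second-order cumulant, and vanishing
of the generators of the higher-order cumulants for two-body interactions).

`L m` plays the role of `𝔏¹(ℋ_m)` and `D m` of the dense subspace `𝔏¹₀(ℋ_m)`.
For the cumulants acting on `𝔏¹(ℋ_{s+n})`, the set `({Y}, s+1, …, s+n)` of the
cluster `Y = (1,…,s)` (treated as one element) together with the particles
`s+1, …, s+n` is modelled by `Fin (n+1)`: the item `0` is the cluster `{Y}` and the
item `i ≥ 1` is the particle `s+i`. `Gc n X t` plays the role of the group
`𝒢_{|θ(X)|}(-t, θ(X))` of the particles `θ(X)` acting on `𝔏¹(ℋ_{s+n})` (with mean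
field scaled interaction `ε Φ`), where `θ` is the declusterization mapping; the
particles of the item `i` are given by `itemParticles s i` (`0`-based numbering).
`cumulant` is the `(1+n)`-th order cumulant
`𝔄_{1+n}(t,{Y},X∖Y) = Σ_P (-1)^{|P|-1}(|P|-1)! ∏_{X_i ⊂ P} 𝒢_{|θ(X_i)|}(-t,θ(X_i))`,
the sum over all partitions `P` of `({Y}, s+1, …, s+n)`.
`Nint m i j` is `𝒩_int(i,j)` on `𝔏¹(ℋ_m)`, pinned by
`(-𝒩_int(i,j)) f = -i(Φ(i,j) f - f Φ(i,j))` via the left and right multiplications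
`Phil`, `Phir` by the bounded potential `Φ(i,j)`; `K n i` is the generator of the
group of the single item `i` (for the cluster `{Y}` it contains the internal
interactions of `Y`).
-/

open MeasureTheory Filter Topology

/-- The particles (0-based) of the item `i` of the set `({Y}, s+1, …, s+n)`:
the cluster `0 = {Y}` consists of the particles `1,…,s` and the item `i ≥ 1`
is the particle `s+i`. -/
def itemParticles (s : ℕ) {n : ℕ} (i : Fin (n + 1)) : Finset ℕ :=
  if (i : ℕ) = 0 then Finset.range s else {s + (i : ℕ) - 1}

/-- The `(1+n)`-th order cumulant of a family of commuting (on disjoint sets of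
items) groups of operators:
`𝔄 = Σ_P (-1)^{|P|-1}(|P|-1)! ∏_{X_i ⊂ P} 𝒢(θ(X_i))`, the sum being over all
partitions `P` of the set of items. -/
noncomputable def cumulant {ι : Type*} [Fintype ι] [DecidableEq ι]
    {E : Type*} [NormedAddCommGroup E] [NormedSpace ℂ E]
    (Gc : Finset ι → E →L[ℂ] E)
    (hcomm : ∀ X Y : Finset ι, Disjoint X Y → Commute (Gc X) (Gc Y)) :
    E →L[ℂ] E :=
  ∑ P : Finpartition (Finset.univ : Finset ι),
    (((-1 : ℂ) ^ (P.parts.card - 1)) * (Nat.factorial (P.parts.card - 1) : ℂ)) •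
      P.parts.noncommProd Gc
        (fun a ha b hb hab => hcomm a b (P.disjoint ha hb hab))

/-! On the dense domain the generator of the group of a set of items `X` is a sum of one-item terms
and of interaction terms between pairs of distinct items of `X`. The groups are commuting,
strongly continuous contractions, so the derivative at `t = 0` of a product of them applied to `f`
is the sum of their generators, and the generator of the cumulant is
`Σ_P (-1)^{|P|-1} (|P|-1)! Σ_{X ∈ P} A(X)`. A one-item term then carries the factor
`Σ_P (-1)^{|P|-1} (|P|-1)!`, and the interaction of a pair `i ≠ j` the same sum over the partitions
having `i` and `j` in the same part; removing `j` identifies the latter with the former sum for one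
item less, and that sum vanishes as soon as there are two items. For two items only the interaction
between `{Y}` and `s+1` survives. -/

open Finset

namespace Finpartition

variable {α : Type*} [DecidableEq α] {T : Finset α} {x : α}

lemma subset_of_mem_insert_empty {Q : Finpartition T} {C : Finset α}
    (hC : C ∈ insert ∅ Q.parts) : C ⊆ T := by
  rcases mem_insert.1 hC with rfl | hC
  exacts [empty_subset T, Q.le hC]

/-- Adds `x` to the part `C` of `Q`, where `C = ∅` stands for a new part `{x}`. -/
def insertPoint (Q : Finpartition T) (hx : x ∉ T) {C : Finset α} (hC : C ∈ insert ∅ Q.parts) :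
    Finpartition (insert x T) where
  parts := insert (insert x C) (Q.parts.erase C)
  supIndep := by
    rw [supIndep_iff_pairwiseDisjoint, coe_insert]
    refine (Q.disjoint.subset (coe_subset.2 (erase_subset C Q.parts))).insert fun d hd _ => ?_
    obtain ⟨hdC, hd⟩ := mem_erase.1 hd
    refine disjoint_insert_left.2 ⟨fun h => hx (Q.le hd h), ?_⟩
    rcases mem_insert.1 hC with rfl | hC
    · exact disjoint_empty_left d
    · exact Q.disjoint hC hd (Ne.symm hdC)
  sup_parts := by
    have hT : C ⊔ (Q.parts.erase C).sup id = T := by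
      rcases mem_insert.1 hC with rfl | hC
      · rw [erase_eq_self.2 Q.empty_notMem_parts, Q.sup_parts]
        exact bot_sup_eq T
      · exact sup_insert.symm.trans (by rw [insert_erase hC, Q.sup_parts])
    rw [sup_insert, id, sup_eq_union, insert_union, ← sup_eq_union, hT]
  bot_notMem := by
    rw [mem_insert, not_or]
    exact ⟨(insert_ne_empty x C).symm, fun h => Q.bot_notMem (mem_of_mem_erase h)⟩

@[simp] lemma insertPoint_parts (Q : Finpartition T) (hx : x ∉ T) {C : Finset α}
    (hC : C ∈ insert ∅ Q.parts) :
    (Q.insertPoint hx hC).parts = insert (insert x C) (Q.parts.erase C) := rfl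

def erasePoint (P : Finpartition (insert x T)) (hx : x ∉ T) : Finpartition T :=
  (P.avoid {x}).copy (by rw [insert_sdiff_of_mem T (mem_singleton_self x),
    sdiff_singleton_eq_erase, erase_eq_of_notMem hx])

lemma erasePoint_parts (P : Finpartition (insert x T)) (hx : x ∉ T) :
    (P.erasePoint hx).parts = (P.parts.image (·.erase x)).erase ∅ := by
  simp only [erasePoint, copy_parts, avoid, ofErase_parts, sdiff_singleton_eq_erase]
  rfl

variable (hx : x ∉ T)

lemma erasePoint_insertPoint (Q : Finpartition T) {C : Finset α} (hC : C ∈ insert ∅ Q.parts) :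
    (Q.insertPoint hx hC).erasePoint hx = Q := by
  have hxC : x ∉ C := fun h => hx (subset_of_mem_insert_empty hC h)
  have hid : (Q.parts.erase C).image (·.erase x) = Q.parts.erase C :=
    (image_congr fun d hd => erase_eq_of_notMem fun h =>
      hx (Q.le (mem_of_mem_erase hd) h)).trans image_id
  ext1
  rw [erasePoint_parts, insertPoint_parts, image_insert, erase_insert hxC, hid]
  rcases mem_insert.1 hC with rfl | hC
  · rw [erase_insert_eq_erase, erase_eq_self.2 (notMem_erase _ _),
      erase_eq_self.2 Q.empty_notMem_parts]
  · rw [insert_erase hC, erase_eq_self.2 Q.empty_notMem_parts]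

lemma part_insertPoint (Q : Finpartition T) {C : Finset α} (hC : C ∈ insert ∅ Q.parts) :
    (Q.insertPoint hx hC).part x = insert x C :=
  part_eq_of_mem _ (mem_insert_self _ _) (mem_insert_self x C)

lemma card_parts_insertPoint (Q : Finpartition T) {C : Finset α} (hC : C ∈ insert ∅ Q.parts) :
    #(Q.insertPoint hx hC).parts = #Q.parts + if C = ∅ then 1 else 0 := by
  have hnew : insert x C ∉ Q.parts.erase C := fun h =>
    hx (Q.le (mem_of_mem_erase h) (mem_insert_self x C))
  rw [insertPoint_parts, card_insert_of_notMem hnew]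
  rcases mem_insert.1 hC with rfl | hC
  · rw [erase_eq_self.2 Q.empty_notMem_parts, if_pos rfl]
  · rw [card_erase_add_one hC, if_neg (Q.ne_empty hC), add_zero]

lemma erase_part_mem_insert_empty (P : Finpartition (insert x T)) :
    (P.part x).erase x ∈ insert ∅ (P.erasePoint hx).parts := by
  rw [erasePoint_parts, mem_insert, mem_erase]
  by_cases h : (P.part x).erase x = ∅
  · exact Or.inl h
  · exact Or.inr ⟨h, mem_image_of_mem _ (P.part_mem.2 (mem_insert_self x T))⟩

lemma insertPoint_erasePoint (P : Finpartition (insert x T)) :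
    (P.erasePoint hx).insertPoint hx (erase_part_mem_insert_empty hx P) = P := by
  have hxP : x ∈ P.part x := P.mem_part (mem_insert_self x T)
  ext c
  rw [insertPoint_parts, insert_erase hxP, mem_insert, mem_erase, erasePoint_parts, mem_erase,
    mem_image]
  constructor
  · rintro (rfl | ⟨hc, -, d, hd, rfl⟩)
    · exact P.part_mem.2 (mem_insert_self x T)
    · by_cases hxd : x ∈ d
      · exact absurd (by rw [P.part_eq_of_mem hd hxd]) hc
      · rwa [erase_eq_of_notMem hxd]
  · intro hc
    by_cases hxc : x ∈ c
    · exact Or.inl (P.part_eq_of_mem hc hxc).symm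
    refine Or.inr ⟨fun h => ?_, P.ne_empty hc, c, hc, erase_eq_of_notMem hxc⟩
    obtain ⟨y, hy⟩ := P.nonempty_of_mem_parts hc
    have hyP : y ∈ P.part x := mem_of_mem_erase (h ▸ hy)
    exact hxc (P.eq_of_mem_parts hc (P.part_mem.2 (mem_insert_self x T)) hy hyP ▸ hxP)

def insertPointEquiv (hx : x ∉ T) :
    (Σ Q : Finpartition T, ↥(insert ∅ Q.parts)) ≃ Finpartition (insert x T) where
  toFun a := a.1.insertPoint hx a.2.2
  invFun P := ⟨P.erasePoint hx, ⟨_, erase_part_mem_insert_empty hx P⟩⟩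
  left_inv a := Sigma.subtype_ext (erasePoint_insertPoint hx a.1 a.2.2) (by
    simp only [part_insertPoint hx]
    exact erase_insert fun h => hx (subset_of_mem_insert_empty a.2.2 h))
  right_inv := insertPoint_erasePoint hx

lemma sum_insert_eq_sum_sum_insertPoint {M : Type*} [AddCommMonoid M]
    (F : Finpartition (insert x T) → M) :
    ∑ P, F P = ∑ Q : Finpartition T, ∑ C : ↥(insert ∅ Q.parts), F (Q.insertPoint hx C.2) :=
  (Fintype.sum_equiv (insertPointEquiv hx) (fun a => F (a.1.insertPoint hx a.2.2)) F
    fun _ => rfl).symm.trans (Fintype.sum_sigma _)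

end Finpartition

def cumulantCoeff (k : ℕ) : ℂ := (-1) ^ (k - 1) * (k - 1).factorial

lemma cumulantCoeff_succ_add_mul_cumulantCoeff {q : ℕ} (hq : q ≠ 0) :
    cumulantCoeff (q + 1) + q * cumulantCoeff q = 0 := by
  obtain ⟨m, rfl⟩ := Nat.exists_eq_succ_of_ne_zero hq
  simp only [cumulantCoeff, Nat.succ_sub_one, Nat.factorial_succ, pow_succ]
  push_cast
  ring

namespace Finpartition

variable {α : Type*} [DecidableEq α]

/-- Grouping the partitions of `insert x T` by their trace `Q` on `T`, the new part `{x}` and the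
`#Q.parts` ways of adding `x` to a part of `Q` contribute opposite amounts. -/
theorem sum_cumulantCoeff_eq_zero {S : Finset α} (hS : 2 ≤ #S) :
    ∑ P : Finpartition S, cumulantCoeff #P.parts = 0 := by
  obtain ⟨x, T, hxT, rfl, -⟩ := card_eq_succ.1 (Nat.sub_add_cancel (by omega : 1 ≤ #S)).symm
  have hT : T ≠ ∅ := by rintro rfl; rw [card_insert_of_notMem hxT, card_empty] at hS; omega
  rw [sum_insert_eq_sum_sum_insertPoint hxT]
  refine sum_eq_zero fun Q _ => ?_
  simp only [card_parts_insertPoint hxT]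
  rw [sum_coe_sort (insert ∅ Q.parts)
      fun C => cumulantCoeff (#Q.parts + if C = ∅ then 1 else 0),
    sum_insert Q.empty_notMem_parts, if_pos rfl,
    sum_congr rfl fun C hC => by rw [if_neg (Q.ne_empty hC), add_zero], sum_const, nsmul_eq_mul]
  exact cumulantCoeff_succ_add_mul_cumulantCoeff (card_pos.2 (Q.parts_nonempty hT)).ne'

/-- The partitions of `insert j T` with `i` and `j` in the same part are obtained from the
partitions of `T` by adding `j` to the part of `i`, which keeps the number of parts. -/
theorem sum_cumulantCoeff_of_mem_part_eq_zero {S : Finset α} {i j : α} (hi : i ∈ S) (hj : j ∈ S)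
    (hij : i ≠ j) (hS : 3 ≤ #S) :
    ∑ P : Finpartition S, (if i ∈ P.part j then cumulantCoeff #P.parts else 0) = 0 := by
  obtain ⟨T, hjT, rfl⟩ : ∃ T, j ∉ T ∧ S = insert j T :=
    ⟨S.erase j, notMem_erase j S, (insert_erase hj).symm⟩
  have hiT : i ∈ T := (mem_insert.1 hi).resolve_left hij
  rw [sum_insert_eq_sum_sum_insertPoint hjT]
  refine (sum_congr rfl fun Q _ => ?_).trans (sum_cumulantCoeff_eq_zero (S := T)
    (by rw [card_insert_of_notMem hjT] at hS; omega))
  simp only [part_insertPoint hjT, card_parts_insertPoint hjT, mem_insert, hij, false_or]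
  rw [sum_coe_sort (insert ∅ Q.parts)
      fun C => if i ∈ C then cumulantCoeff (#Q.parts + if C = ∅ then 1 else 0) else 0,
    sum_eq_single_of_mem (Q.part i) (mem_insert_of_mem (Q.part_mem.2 hiT)),
    if_pos (Q.mem_part hiT), if_neg (Q.ne_empty (Q.part_mem.2 hiT)), add_zero]
  intro C hC hCi
  refine if_neg fun hiC => hCi ?_
  rcases mem_insert.1 hC with rfl | hC
  · exact absurd hiC (notMem_empty i)
  · exact (Q.part_eq_of_mem hC hiC).symm

variable {M : Type*} [AddCommMonoid M] {S : Finset α}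

lemma sum_parts_sum (P : Finpartition S) (k : α → M) :
    ∑ X ∈ P.parts, ∑ i ∈ X, k i = ∑ i ∈ S, k i := by
  have h := sum_biUnion (f := k) P.disjoint
  rw [P.biUnion_parts] at h
  exact h.symm

lemma sum_parts_sum_offDiag (P : Finpartition S) (m : α × α → M) :
    ∑ X ∈ P.parts, ∑ p ∈ X.offDiag, m p
      = ∑ p ∈ S.offDiag, if p.1 ∈ P.part p.2 then m p else 0 := by
  have hdisj : (P.parts : Set (Finset α)).PairwiseDisjoint offDiag := fun X hX Y hY hXY =>
    disjoint_left.2 fun p hpX hpY =>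
      disjoint_left.1 (P.disjoint hX hY hXY) (mem_offDiag.1 hpX).1 (mem_offDiag.1 hpY).1
  rw [← sum_biUnion hdisj, ← sum_filter]
  congr 1
  ext ⟨a, b⟩
  simp only [mem_biUnion, mem_offDiag, mem_filter, P.mem_part_iff_exists]
  constructor
  · rintro ⟨X, hX, ha, hb, hab⟩
    exact ⟨⟨P.le hX ha, P.le hX hb, hab⟩, X, hX, ha, hb⟩
  · rintro ⟨⟨-, -, hab⟩, X, hX, ha, hb⟩
    exact ⟨X, hX, ha, hb, hab⟩

end Finpartition

def oneTwoBodySum {ι E : Type*} [AddCommMonoid E] (k : ι → E) (m : ι × ι → E)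
    (X : Finset ι) : E :=
  ∑ i ∈ X, k i + ∑ p ∈ X.offDiag, m p

theorem sum_cumulantCoeff_smul_sum_oneTwoBodySum {α E : Type*} [DecidableEq α] [AddCommGroup E]
    [Module ℂ E] {S : Finset α} (hS : 3 ≤ #S) (k : α → E) (m : α × α → E) :
    ∑ P : Finpartition S, cumulantCoeff #P.parts • ∑ X ∈ P.parts, oneTwoBodySum k m X = 0 := by
  simp only [oneTwoBodySum, sum_add_distrib, Finpartition.sum_parts_sum,
    Finpartition.sum_parts_sum_offDiag, smul_add]
  rw [← sum_smul, Finpartition.sum_cumulantCoeff_eq_zero (by omega), zero_smul, zero_add]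
  simp only [smul_sum]
  rw [sum_comm]
  refine sum_eq_zero fun p hp => ?_
  obtain ⟨h1, h2, h12⟩ := mem_offDiag.1 hp
  simp only [smul_ite, smul_zero, ← ite_zero_smul, ← sum_smul,
    Finpartition.sum_cumulantCoeff_of_mem_part_eq_zero h1 h2 h12 hS, zero_smul]

lemma oneTwoBodySum_univ_sub_fin_two {E : Type*} [AddCommGroup E] (k : Fin 2 → E)
    (m : Fin 2 × Fin 2 → E) :
    oneTwoBodySum k m univ - (oneTwoBodySum k m {1} + oneTwoBodySum k m {0})
      = m (0, 1) + m (1, 0) := by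
  have hoff : (univ : Finset (Fin 2)).offDiag = {(0, 1), (1, 0)} := by decide
  simp only [oneTwoBodySum, hoff, Fin.sum_univ_two, offDiag_singleton, sum_singleton, sum_empty,
    sum_pair (by decide : ((0 : Fin 2), (1 : Fin 2)) ≠ (1, 0))]
  abel

section Generators

open Filter Topology

variable {E : Type*} [NormedAddCommGroup E] [NormedSpace ℂ E]

lemma tendsto_apply_of_norm_apply_le {β : Type*} {l : Filter β} {G : β → E →L[ℂ] E}
    (hG : ∀ b x, ‖G b x‖ ≤ ‖x‖) {g : β → E} {v : E} (hg : Tendsto g l (𝓝 v))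
    (hGv : Tendsto (fun b => G b v) l (𝓝 v)) : Tendsto (fun b => G b (g b)) l (𝓝 v) := by
  have h0 : Tendsto (fun b => G b (g b - v)) l (𝓝 0) :=
    squeeze_zero_norm (fun b => hG b _) (tendsto_iff_norm_sub_tendsto_zero.1 hg)
  simpa only [map_sub, sub_add_cancel, zero_add] using h0.add hGv

lemma hasDerivAt_of_sub_eq_integral [CompleteSpace E] {u v : ℝ → E} {a : ℝ} (hv : Continuous v)
    (hu : ∀ t, u t - u a = ∫ τ in a..t, v τ) : HasDerivAt u (v a) a := by
  have hu' : u = fun t => u a + ∫ τ in a..t, v τ := funext fun t => by rw [← hu]; abel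
  rw [hu']
  exact (intervalIntegral.integral_hasDerivAt_right (hv.intervalIntegrable a a)
    (hv.stronglyMeasurableAtFilter _ _) hv.continuousAt).const_add _

/-- `G` need not be differentiable: contractivity and strong continuity suffice to pass to the
limit in `G t (t⁻¹ • (g t - g 0))`. -/
lemma hasDerivAt_apply_of_norm_apply_le {G : ℝ → E →L[ℂ] E}
    (hG0 : G 0 = ContinuousLinearMap.id ℂ E) (hG : ∀ t x, ‖G t x‖ ≤ ‖x‖)
    (hcont : ∀ x, Continuous fun t => G t x) {g : ℝ → E} {f l m : E} (hg : HasDerivAt g l 0)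
    (hg0 : g 0 = f) (hGf : HasDerivAt (fun t => G t f) m 0) :
    HasDerivAt (fun t => G t (g t)) (l + m) 0 := by
  rw [hasDerivAt_iff_tendsto_slope] at hg hGf ⊢
  have hGl : Tendsto (fun t => G t l) (𝓝[≠] 0) (𝓝 l) := by
    simpa [hG0] using ((hcont l).tendsto 0).mono_left nhdsWithin_le_nhds
  refine ((tendsto_apply_of_norm_apply_le (fun t => hG t) hg hGl).add hGf).congr fun t => ?_
  simp only [slope_def_module, hG0, hg0, ContinuousLinearMap.id_apply,
    ContinuousLinearMap.map_smul_of_tower, map_sub, ← smul_add]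
  abel_nf

lemma hasDerivAt_noncommProd_apply {ι : Type*} [DecidableEq ι] {G : ι → ℝ → E →L[ℂ] E}
    (hG0 : ∀ i, G i 0 = ContinuousLinearMap.id ℂ E) (hG : ∀ i t x, ‖G i t x‖ ≤ ‖x‖)
    (hcont : ∀ i x, Continuous fun t => G i t x) {f : E} {A : ι → E}
    (hA : ∀ i, HasDerivAt (fun t => G i t f) (A i) 0) (s : Finset ι)
    (hcomm : (s : Set ι).Pairwise fun i j => ∀ t, Commute (G i t) (G j t)) :
    HasDerivAt (fun t => s.noncommProd (fun i => G i t) (fun _ hi _ hj hij => hcomm hi hj hij t) f)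
      (∑ i ∈ s, A i) 0 := by
  induction s using Finset.induction_on with
  | empty =>
    convert hasDerivAt_const (0 : ℝ) f using 1
    · exact funext fun t => congrArg (fun T : E →L[ℂ] E => T f) (noncommProd_empty _ _)
    · exact sum_empty
  | @insert a s ha ih =>
    have hcomm' := hcomm.mono (coe_subset.2 (subset_insert a s))
    have hprod : ∀ t, (insert a s).noncommProd (fun i => G i t)
        (fun _ hi _ hj hij => hcomm hi hj hij t) f
        = G a t (s.noncommProd (fun i => G i t) (fun _ hi _ hj hij => hcomm' hi hj hij t) f) :=
      fun t => congrArg (fun T : E →L[ℂ] E => T f) (noncommProd_insert_of_notMem _ _ _ _ ha)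
    have hone : s.noncommProd (fun i => G i 0) (fun _ hi _ hj hij => hcomm' hi hj hij 0) = 1 :=
      (noncommProd_eq_pow_card _ _ _ 1 fun i _ => hG0 i).trans (one_pow _)
    simp only [hprod, sum_insert ha, add_comm (A a)]
    exact hasDerivAt_apply_of_norm_apply_le (hG0 a) (hG a) (hcont a) (ih hcomm')
      (by rw [hone]; rfl) (hA a)

lemma cumulant_eq_zero_of_forall_eq_one {ι : Type*} [Fintype ι] [DecidableEq ι]
    (hι : 2 ≤ Fintype.card ι) (G : Finset ι → E →L[ℂ] E)
    (hcomm : ∀ X Y, Disjoint X Y → Commute (G X) (G Y)) (hG : ∀ X, G X = 1) :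
    cumulant G hcomm = 0 := by
  have hone : ∀ P : Finpartition (univ : Finset ι),
      P.parts.noncommProd G (fun a ha b hb hab => hcomm a b (P.disjoint ha hb hab)) = 1 :=
    fun P => (noncommProd_eq_pow_card _ _ _ 1 fun X _ => hG X).trans (one_pow _)
  simp only [cumulant, hone]
  rw [← sum_smul]
  convert zero_smul ℂ (1 : E →L[ℂ] E)
  exact Finpartition.sum_cumulantCoeff_eq_zero (by rwa [card_univ])

theorem hasDerivAt_cumulant_apply {ι : Type*} [Fintype ι] [DecidableEq ι]
    {G : Finset ι → ℝ → E →L[ℂ] E}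
    (hG0 : ∀ X, G X 0 = ContinuousLinearMap.id ℂ E) (hG : ∀ X t x, ‖G X t x‖ ≤ ‖x‖)
    (hcont : ∀ X x, Continuous fun t => G X t x)
    (hcomm : ∀ X Y t, Disjoint X Y → Commute (G X t) (G Y t)) {f : E} {A : Finset ι → E}
    (hA : ∀ X, HasDerivAt (fun t => G X t f) (A X) 0) :
    HasDerivAt (fun t => cumulant (fun X => G X t) (fun X Y h => hcomm X Y t h) f)
      (∑ P : Finpartition (univ : Finset ι), cumulantCoeff #P.parts • ∑ X ∈ P.parts, A X) 0 := by
  simp only [cumulant, _root_.sum_apply, smul_apply]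
  exact HasDerivAt.fun_sum fun (P : Finpartition (univ : Finset ι)) _ =>
    (hasDerivAt_noncommProd_apply hG0 hG hcont hA P.parts fun X hX Y hY h t =>
      hcomm X Y t (P.disjoint hX hY h)).fun_const_smul (cumulantCoeff #P.parts)

lemma tendsto_inv_smul_of_hasDerivAt_zero {u : ℝ → E} {a : E} (hu : HasDerivAt u a 0)
    (hu0 : u 0 = 0) : Tendsto (fun t : ℝ => (t : ℂ)⁻¹ • u t) (𝓝[≠] 0) (𝓝 a) := by
  rw [hasDerivAt_iff_tendsto_slope] at hu
  refine hu.congr fun t => ?_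
  rw [slope_def_module, hu0, sub_zero, sub_zero, ← Complex.ofReal_inv, Complex.coe_smul]

end Generators

theorem generator_of_second_and_higher_order_cumulants_general
    (s : ℕ)
    (L : ℕ → Type*) [∀ m, NormedAddCommGroup (L m)] [∀ m, NormedSpace ℂ (L m)]
    [∀ m, CompleteSpace (L m)]
    (ε : ℝ)
    -- dense subspaces `𝔏¹₀(ℋ_m) ⊆ 𝔏¹(ℋ_m)`
    (D : ∀ m, Submodule ℂ (L m))
    -- the groups `𝒢_{|θ(X)|}(-t, θ(X))` on `𝔏¹(ℋ_{s+n})`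
    (Gc : (n : ℕ) → Finset (Fin (n + 1)) → ℝ → L (s + n) →L[ℂ] L (s + n))
    -- `𝒩_int(i,j)` and the multiplications by the bounded potential `Φ(i,j)`
    (Nint : (m : ℕ) → ℕ → ℕ → L m →L[ℂ] L m)
    -- generators of the one-item groups
    (K : (n : ℕ) → Fin (n + 1) → L (s + n) →ₗ[ℂ] L (s + n))
    -- groups of operators: isometric, strongly continuous, commuting on disjoint sets
    (hG0 : ∀ n X, Gc n X 0 = ContinuousLinearMap.id ℂ (L (s + n)))
    (hGiso : ∀ n X t f, ‖Gc n X t f‖ = ‖f‖)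
    (hGcont : ∀ n X f, Continuous fun t : ℝ => Gc n X t f)
    (hcomm : ∀ n (X Y : Finset (Fin (n + 1))) (t : ℝ),
      Disjoint X Y → Commute (Gc n X t) (Gc n Y t))
    -- `𝒢_{θ(X)}` is generated by the one-item generators plus the `ε`-scaled two-body
    -- cross interactions between the items of `X` (integral form on the dense domain)
    (hgen : ∀ n (X : Finset (Fin (n + 1))), ∀ f ∈ D (s + n), ∀ t : ℝ,
      Gc n X t f - f
        = ∫ τ in (0:ℝ)..t, Gc n X τ
            ((∑ i ∈ X, K n i f)
              - (ε : ℂ) • ∑ p ∈ X.offDiag.filter (fun p => p.1 < p.2),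
                  ∑ a ∈ itemParticles s p.1, ∑ b ∈ itemParticles s p.2,
                    (Nint (s + n) a b) f)) :
    -- (i) for `n = 1`, in the sense of the norm convergence on `𝔏¹(ℋ_{s+1})`:
    -- `lim_{t→0} (1/t) 𝔄₂(t,{Y},s+1) f = -ε Σ_{i=1}^s 𝒩_int(i,s+1) f`, where
    -- `𝔄₂(t,{Y},s+1) = 𝒢_{s+1}(-t,Y,s+1) - 𝒢_s(-t,Y) 𝒢₁(-t,s+1)`
    (∀ f ∈ D (s + 1),
      Filter.Tendsto
        (fun t : ℝ => ((t : ℂ))⁻¹ •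
          ((Gc 1 Finset.univ t) f - (Gc 1 {(0 : Fin 2)} t) ((Gc 1 {(1 : Fin 2)} t) f)))
        (nhdsWithin 0 {(0:ℝ)}ᶜ)
        (nhds (-((ε : ℂ) • (∑ i ∈ Finset.range s, Nint (s + 1) i s) f))))
    -- (ii) for `n > 1`: `lim_{t→0} (1/t) 𝔄_{1+n}(t) f = 0` in trace norm on `𝔏¹(ℋ_{s+n})`
    ∧ (∀ n : ℕ, 1 < n → ∀ f ∈ D (s + n),
        Filter.Tendsto
          (fun t : ℝ => ((t : ℂ))⁻¹ •
            (cumulant (fun X => Gc n X t) (fun X Y h => hcomm n X Y t h) f))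
          (nhdsWithin 0 {(0:ℝ)}ᶜ) (nhds 0)) := by
  set m : (n : ℕ) → L (s + n) → Fin (n + 1) × Fin (n + 1) → L (s + n) := fun n f p =>
    if p.1 < p.2 then
      -((ε : ℂ) • ∑ a ∈ itemParticles s p.1, ∑ b ∈ itemParticles s p.2, Nint (s + n) a b f)
    else 0 with hm
  have hA : ∀ n X, ∀ f ∈ D (s + n),
      HasDerivAt (fun t => Gc n X t f) (oneTwoBodySum (fun i => K n i f) (m n f) X) 0 := by
    intro n X f hf
    have hu : ∀ t, Gc n X t f - Gc n X 0 f = ∫ τ in (0 : ℝ)..t, Gc n X τ _ := fun t => by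
      simpa only [hG0, ContinuousLinearMap.id_apply] using hgen n X f hf t
    refine (hasDerivAt_of_sub_eq_integral (hGcont n X _) hu).congr_deriv ?_
    simp only [hG0, ContinuousLinearMap.id_apply, oneTwoBodySum, hm, ← sum_filter,
      sum_neg_distrib, ← smul_sum, sub_eq_add_neg]
  have hiso : ∀ n X t f, ‖Gc n X t f‖ ≤ ‖f‖ := fun n X t f => (hGiso n X t f).le
  refine ⟨fun f hf => ?_, fun n hn f hf => ?_⟩
  · have h := (hA 1 univ f hf).sub (hasDerivAt_apply_of_norm_apply_le (hG0 1 {0})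
      (hiso 1 {0}) (hGcont 1 {0}) (hA 1 {1} f hf) (by rw [hG0]; rfl) (hA 1 {0} f hf))
    rw [oneTwoBodySum_univ_sub_fin_two] at h
    refine tendsto_inv_smul_of_hasDerivAt_zero (h.congr_deriv ?_) (by simp [hG0])
    simp [hm, itemParticles]
  · have h := hasDerivAt_cumulant_apply (hG0 n) (hiso n) (hGcont n) (hcomm n) (hA n · f hf)
    rw [sum_cumulantCoeff_smul_sum_oneTwoBodySum (by rw [card_univ, Fintype.card_fin]; omega)] at h
    exact tendsto_inv_smul_of_hasDerivAt_zero h (by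
      rw [cumulant_eq_zero_of_forall_eq_one (by rw [Fintype.card_fin]; omega) _ _ (hG0 n)]; rfl)

theorem generator_of_second_and_higher_order_cumulants
    (s : ℕ)
    (L : ℕ → Type*) [∀ m, NormedAddCommGroup (L m)] [∀ m, NormedSpace ℂ (L m)]
    [∀ m, CompleteSpace (L m)]
    (ε : ℝ) (hε : 0 < ε)
    -- dense subspaces `𝔏¹₀(ℋ_m) ⊆ 𝔏¹(ℋ_m)`
    (D : ∀ m, Submodule ℂ (L m)) (hD : ∀ m, Dense ((D m : Set (L m))))
    -- the groups `𝒢_{|θ(X)|}(-t, θ(X))` on `𝔏¹(ℋ_{s+n})`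
    (Gc : (n : ℕ) → Finset (Fin (n + 1)) → ℝ → L (s + n) →L[ℂ] L (s + n))
    -- `𝒩_int(i,j)` and the multiplications by the bounded potential `Φ(i,j)`
    (Nint Phil Phir : (m : ℕ) → ℕ → ℕ → L m →L[ℂ] L m)
    (hNint : ∀ m i j f, (Nint m i j) f = Complex.I • ((Phil m i j) f - (Phir m i j) f))
    -- generators of the one-item groups
    (K : (n : ℕ) → Fin (n + 1) → L (s + n) →ₗ[ℂ] L (s + n))
    -- groups of operators: isometric, strongly continuous, commuting on disjoint sets
    (hG0 : ∀ n X, Gc n X 0 = ContinuousLinearMap.id ℂ (L (s + n)))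
    (hGgrp : ∀ n X t u, Gc n X (t + u) = (Gc n X t).comp (Gc n X u))
    (hGiso : ∀ n X t f, ‖Gc n X t f‖ = ‖f‖)
    (hGcont : ∀ n X f, Continuous fun t : ℝ => Gc n X t f)
    (hcomm : ∀ n (X Y : Finset (Fin (n + 1))) (t : ℝ),
      Disjoint X Y → Commute (Gc n X t) (Gc n Y t))
    -- `𝒢_{θ(X)}` is generated by the one-item generators plus the `ε`-scaled two-body
    -- cross interactions between the items of `X` (integral form on the dense domain)
    (hgen : ∀ n (X : Finset (Fin (n + 1))), ∀ f ∈ D (s + n), ∀ t : ℝ,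
      Gc n X t f - f
        = ∫ τ in (0:ℝ)..t, Gc n X τ
            ((∑ i ∈ X, K n i f)
              - (ε : ℂ) • ∑ p ∈ X.offDiag.filter (fun p => p.1 < p.2),
                  ∑ a ∈ itemParticles s p.1, ∑ b ∈ itemParticles s p.2,
                    (Nint (s + n) a b) f)) :
    -- (i) for `n = 1`, in the sense of the norm convergence on `𝔏¹(ℋ_{s+1})`:
    -- `lim_{t→0} (1/t) 𝔄₂(t,{Y},s+1) f = -ε Σ_{i=1}^s 𝒩_int(i,s+1) f`, where
    -- `𝔄₂(t,{Y},s+1) = 𝒢_{s+1}(-t,Y,s+1) - 𝒢_s(-t,Y) 𝒢₁(-t,s+1)`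
    (∀ f ∈ D (s + 1),
      Filter.Tendsto
        (fun t : ℝ => ((t : ℂ))⁻¹ •
          ((Gc 1 Finset.univ t) f - (Gc 1 {(0 : Fin 2)} t) ((Gc 1 {(1 : Fin 2)} t) f)))
        (nhdsWithin 0 {(0:ℝ)}ᶜ)
        (nhds (-((ε : ℂ) • (∑ i ∈ Finset.range s, Nint (s + 1) i s) f))))
    -- (ii) for `n > 1`: `lim_{t→0} (1/t) 𝔄_{1+n}(t) f = 0` in trace norm on `𝔏¹(ℋ_{s+n})`
    ∧ (∀ n : ℕ, 1 < n → ∀ f ∈ D (s + n),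
        Filter.Tendsto
          (fun t : ℝ => ((t : ℂ))⁻¹ •
            (cumulant (fun X => Gc n X t) (fun X Y h => hcomm n X Y t h) f))
          (nhdsWithin 0 {(0:ℝ)}ᶜ) (nhds 0)) :=
  generator_of_second_and_higher_order_cumulants_general s L ε D Gc Nint K hG0 hGiso hGcont hcomm
    hgen
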